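/- Let α ∈ ℂ, let E_2 be the 2×2 matrix with a 1 in the (1,2) entry and zeros elsewhere, and set Ξ = (Ξ_1, Ξ_2) = (α I_2 + E_2, α E_2). Then Ξ is convexotonic, i.e., Ξ_k Ξ_j = Σ_{s=1}^2 (Ξ_j)_{k,s} Ξ_s for all j,k ∈ {1,2}; and for every n and every pair X = (X_1,X_2) of n×n complex matrices with I − αX_1 invertible, the matrix I − Λ_Ξ(X) is invertible and the associated convexotonic map satisfies X(I − Λ_Ξ(X))^{-1} = ( X_1(I−αX_1)^{-1}, (I−αX_1)^{-1}(X_2 + X_1^2)(I−αX_1)^{-1} ). -/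

import Mathlib

open scoped Kronecker Matrix Matrix.Norms.L2Operator ComplexOrder

noncomputable section

/-- `Λ_A(X) = Σⱼ Aⱼ ⊗ Xⱼ` (Kronecker product), a `dn × dn` matrix. -/
def lamK {g d n : ℕ} (A : Fin g → Matrix (Fin d) (Fin d) ℂ)
    (X : Fin g → Matrix (Fin n) (Fin n) ℂ) :
    Matrix (Fin d × Fin n) (Fin d × Fin n) ℂ :=
  ∑ j, (A j) ⊗ₖ (X j)

/-- `L_A(X) = I + Λ_A(X) + Λ_A(X)^*`. -/
def Lpen {g d n : ℕ} (A : Fin g → Matrix (Fin d) (Fin d) ℂ)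
    (X : Fin g → Matrix (Fin n) (Fin n) ℂ) :
    Matrix (Fin d × Fin n) (Fin d × Fin n) ℂ :=
  1 + lamK A X + (lamK A X)ᴴ

/-- The `n × n` block of a `gn × gn` matrix in position `(j, i)`. -/
def blk {g n : ℕ} (M : Matrix (Fin g × Fin n) (Fin g × Fin n) ℂ) (j i : Fin g) :
    Matrix (Fin n) (Fin n) ℂ :=
  fun a b => M (j, a) (i, b)

/-- The convexotonic map `p(X) = X (I - Λ_Ξ(X))⁻¹`, given blockwise by
`p(X)ᵢ = Σⱼ Xⱼ [(I - Λ_Ξ(X))⁻¹]_{j,i}`. -/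
def pmap {g n : ℕ} (Ξ : Fin g → Matrix (Fin g) (Fin g) ℂ)
    (X : Fin g → Matrix (Fin n) (Fin n) ℂ) : Fin g → Matrix (Fin n) (Fin n) ℂ :=
  fun i => ∑ j, X j * blk ((1 - lamK Ξ X)⁻¹) j i

/-- The convexotonic map `q(X) = X (I + Λ_Ξ(X))⁻¹`, given blockwise by
`q(X)ᵢ = Σⱼ Xⱼ [(I + Λ_Ξ(X))⁻¹]_{j,i}`. -/
def qmap {g n : ℕ} (Ξ : Fin g → Matrix (Fin g) (Fin g) ℂ)
    (X : Fin g → Matrix (Fin n) (Fin n) ℂ) : Fin g → Matrix (Fin n) (Fin n) ℂ :=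
  fun i => ∑ j, X j * blk ((1 + lamK Ξ X)⁻¹) j i

/-- A tuple `Ξ` of `g × g` matrices is convexotonic if
`Ξ_k Ξ_j = Σ_s (Ξ_j)_{k,s} Ξ_s` for all `j, k`. -/
def Convexotonic {g : ℕ} (Ξ : Fin g → Matrix (Fin g) (Fin g) ℂ) : Prop :=
  ∀ j k, Ξ k * Ξ j = ∑ s, (Ξ j) k s • Ξ s

/-- `Λ_A(α) = Σⱼ αⱼ Aⱼ` for a scalar point `α ∈ ℂ^g`. -/
def lamScalar {g d : ℕ} (A : Fin g → Matrix (Fin d) (Fin d) ℂ) (α : Fin g → ℂ) :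
    Matrix (Fin d) (Fin d) ℂ :=
  ∑ j, α j • A j

/-- A hyperbasis of `ℂ^d`: `d+1` vectors, each `d` of which form a basis. -/
def Hyperbasis {d : ℕ} (u : Fin (d + 1) → (Fin d → ℂ)) : Prop :=
  ∀ i : Fin (d + 1),
    LinearIndependent ℂ (fun j : {j : Fin (d + 1) // j ≠ i} => u j) ∧
    Submodule.span ℂ (Set.range fun j : {j : Fin (d + 1) // j ≠ i} => u j) = ⊤

/-- The tuple `A ∈ M_d(ℂ)^g` is sv-generic. -/
def SvGeneric {g d : ℕ} (A : Fin g → Matrix (Fin d) (Fin d) ℂ) : Prop :=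
  (∃ (α : Fin (d + 1) → (Fin g → ℂ)) (u : Fin (d + 1) → (Fin d → ℂ)),
    (∀ j, (1 - (lamScalar A (α j))ᴴ * lamScalar A (α j)).PosSemidef ∧
      u j ≠ 0 ∧
      LinearMap.ker (Matrix.mulVecLin (1 - (lamScalar A (α j))ᴴ * lamScalar A (α j)))
        = Submodule.span ℂ {u j}) ∧
    Hyperbasis u) ∧
  (∃ (β : Fin d → (Fin g → ℂ)) (v : Fin d → (Fin d → ℂ)),
    (∀ k, (1 - lamScalar A (β k) * (lamScalar A (β k))ᴴ).PosSemidef ∧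
      v k ≠ 0 ∧
      LinearMap.ker (Matrix.mulVecLin (1 - lamScalar A (β k) * (lamScalar A (β k))ᴴ))
        = Submodule.span ℂ {v k}) ∧
    LinearIndependent ℂ v ∧ Submodule.span ℂ (Set.range v) = ⊤)

/-- Evaluation of a `k × l` matrix of noncommutative polynomials at a tuple of
`n × n` matrices, yielding a `kn × ln` matrix. -/
def polyEval {k l g n : ℕ} (Q : Matrix (Fin k) (Fin l) (FreeAlgebra ℂ (Fin g)))
    (X : Fin g → Matrix (Fin n) (Fin n) ℂ) :
    Matrix (Fin k × Fin n) (Fin l × Fin n) ℂ :=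
  fun a b => (FreeAlgebra.lift ℂ X) (Q a.1 b.1) a.2 b.2

/-- `E₂`: the `2 × 2` matrix unit in position `(1,2)`. -/
def E2 : Matrix (Fin 2) (Fin 2) ℂ := Matrix.single 0 1 1

/-!
With `Ξ = (αI + E₂, αE₂)` the matrix `Λ_Ξ(X)` is block upper triangular,
`[[αX₁, X₁ + αX₂], [0, αX₁]]`, so `I - Λ_Ξ(X)` has both diagonal blocks equal to `D = I - αX₁`
and inverse `[[D⁻¹, D⁻¹(X₁ + αX₂)D⁻¹], [0, D⁻¹]]`. Reading off `p(X)` and using that `X₁`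
commutes with `D⁻¹` gives `(X₁D⁻¹, D⁻¹(X₁(X₁ + αX₂) + DX₂)D⁻¹)`, and the `αX₁X₂` terms cancel.
-/

theorem convexotonic_smul_one_add_E2 (α : ℂ) :
    Convexotonic ![α • (1 : Matrix (Fin 2) (Fin 2) ℂ) + E2, α • E2] := by
  intro j k
  fin_cases j <;> fin_cases k <;>
    · ext a b
      fin_cases a <;> fin_cases b <;>
        simp [E2, Matrix.mul_apply, Matrix.single, Matrix.one_apply]

theorem lamK_eq_comp {g d n : ℕ} (A : Fin g → Matrix (Fin d) (Fin d) ℂ)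
    (X : Fin g → Matrix (Fin n) (Fin n) ℂ) :
    lamK A X = Matrix.comp _ _ _ _ ℂ (.of fun i j => ∑ k, A k i j • X k) := by
  ext ⟨i, a⟩ ⟨j, b⟩
  simp [lamK, Matrix.comp_apply, Matrix.sum_apply]

theorem pmap_eq_sum_comp_symm {g n : ℕ} (Ξ : Fin g → Matrix (Fin g) (Fin g) ℂ)
    (X : Fin g → Matrix (Fin n) (Fin n) ℂ) (i : Fin g) :
    pmap Ξ X i = ∑ j, X j * (Matrix.comp _ _ _ _ ℂ).symm (1 - lamK Ξ X)⁻¹ j i :=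
  rfl

theorem one_sub_lamK_smul_one_add_E2 {n : ℕ} (α : ℂ) (X : Fin 2 → Matrix (Fin n) (Fin n) ℂ) :
    1 - lamK ![α • (1 : Matrix (Fin 2) (Fin 2) ℂ) + E2, α • E2] X
      = Matrix.comp _ _ _ _ ℂ !![1 - α • X 0, -(X 0 + α • X 1); 0, 1 - α • X 0] := by
  ext ⟨i, a⟩ ⟨j, b⟩
  fin_cases i <;> fin_cases j <;>
    simp [lamK_eq_comp, E2, Matrix.single, Fin.sum_univ_two, Matrix.one_apply]

theorem Matrix.upperTriangular_fin_two_mul_inv {R : Type*} [Ring R] (u : Rˣ) (y : R) :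
    !![(u : R), -y; 0, ↑u] * !![↑u⁻¹, ↑u⁻¹ * y * ↑u⁻¹; 0, ↑u⁻¹] = 1 := by
  rw [Matrix.mul_fin_two, Matrix.one_fin_two]
  simp [← mul_assoc]

theorem eq_units_inv_mul_add_mul_self_mul_units_inv {𝕜 R : Type*} [CommRing 𝕜] [Ring R]
    [Algebra 𝕜 R] (α : 𝕜) (x₀ x₁ : R) (u : Rˣ) (hu : (u : R) = 1 - α • x₀) :
    x₀ * (↑u⁻¹ * (x₀ + α • x₁) * ↑u⁻¹) + x₁ * ↑u⁻¹ = ↑u⁻¹ * (x₁ + x₀ * x₀) * ↑u⁻¹ := by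
  have hc : Commute x₀ ↑u⁻¹ := Commute.units_inv_right <|
    hu ▸ (Commute.one_right x₀).sub_right ((Commute.refl x₀).smul_right α)
  have hx₁ : x₁ * ↑u⁻¹ = ↑u⁻¹ * (↑u * x₁) * ↑u⁻¹ := by simp [← mul_assoc]
  calc x₀ * (↑u⁻¹ * (x₀ + α • x₁) * ↑u⁻¹) + x₁ * ↑u⁻¹
      = ↑u⁻¹ * (x₀ * (x₀ + α • x₁) + ↑u * x₁) * ↑u⁻¹ := by
        rw [hx₁, ← mul_assoc, ← mul_assoc, hc.eq]; noncomm_ring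
    _ = ↑u⁻¹ * (x₁ + x₀ * x₀) * ↑u⁻¹ := by
        rw [hu]
        congr 2
        simp only [mul_add, sub_mul, one_mul, mul_smul_comm, smul_mul_assoc]
        abel

/-- the tuple `Ξ = (α I₂ + E₂, α E₂)` is convexotonic, and whenever
`I - α X₁` is invertible so is `I - Λ_Ξ(X)`, with
`X(I - Λ_Ξ(X))⁻¹ = (X₁(I-αX₁)⁻¹, (I-αX₁)⁻¹ (X₂ + X₁²)(I-αX₁)⁻¹)`. -/
theorem composite_map_is_convexotonic (α : ℂ) :
    Convexotonic ![α • (1 : Matrix (Fin 2) (Fin 2) ℂ) + E2, α • E2] ∧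
    ∀ (n : ℕ) (X : Fin 2 → Matrix (Fin n) (Fin n) ℂ),
      IsUnit (1 - α • X 0) →
        IsUnit (1 - lamK ![α • (1 : Matrix (Fin 2) (Fin 2) ℂ) + E2, α • E2] X) ∧
        pmap ![α • (1 : Matrix (Fin 2) (Fin 2) ℂ) + E2, α • E2] X 0
          = X 0 * (1 - α • X 0)⁻¹ ∧
        pmap ![α • (1 : Matrix (Fin 2) (Fin 2) ℂ) + E2, α • E2] X 1
          = (1 - α • X 0)⁻¹ * (X 1 + X 0 * X 0) * (1 - α • X 0)⁻¹ := by
  refine ⟨convexotonic_smul_one_add_E2 α, fun n X hD => ?_⟩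
  set u := hD.unit
  have hu_inv : (↑u⁻¹ : Matrix (Fin n) (Fin n) ℂ) = (1 - α • X 0)⁻¹ := by
    rw [Matrix.coe_units_inv, IsUnit.unit_spec]
  have hmul : (1 - lamK ![α • (1 : Matrix (Fin 2) (Fin 2) ℂ) + E2, α • E2] X) *
      Matrix.comp _ _ _ _ ℂ
        !![(1 - α • X 0)⁻¹, (1 - α • X 0)⁻¹ * (X 0 + α • X 1) * (1 - α • X 0)⁻¹;
          0, (1 - α • X 0)⁻¹] = 1 := by
    rw [one_sub_lamK_smul_one_add_E2, ← Matrix.compRingEquiv_apply, ← Matrix.compRingEquiv_apply,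
      ← map_mul, ← hu_inv, ← IsUnit.unit_spec hD, Matrix.upperTriangular_fin_two_mul_inv, map_one]
  refine ⟨.of_mul_eq_one _ hmul, ?_, ?_⟩ <;>
    rw [pmap_eq_sum_comp_symm, Matrix.inv_eq_right_inv hmul, Equiv.symm_apply_apply,
      Fin.sum_univ_two]
  · simp
  · simpa [hu_inv] using eq_units_inv_mul_add_mul_self_mul_units_inv α (X 0) (X 1) u hD.unit_spec
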